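/- (Step 2 of the parabolic maximum principle.) Let a be a deterministic balanced time-dependent environment with jump range U and let 𝒟 ⊂ ℤ^d × ℤ be finite with parabolic boundary 𝒟^p. Let u : 𝒟 ∪ 𝒟^p → ℝ. There is a constant C = C(d) such that for every (x,n) ∈ Γ (i.e., with I_u(x,n) ≠ ∅) with |conv(U_{x,n})| > 0, the Lebesgue measure of I_u(x,n) satisfies |I_u(x,n)| ≤ C (#U)^d (L*_a u(x,n))^d / |conv(U_{x,n})|, where L*_a u(x,n) := ∑_{z∈U, z≠0} a_n(x,z)(u(x,n) − u(x+z,n+1)). -/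

import Mathlib

/-!
Balance of the environment gives `∑_z a_n(x,z) q·z = 0` for every slope `q`, while each
`q ∈ I_u(x,n)` satisfies `-q·z ≤ u(x,n) - u(x+z,n+1)` because `(x+z,n+1) ∈ 𝒟 ∪ 𝒟^p`.
Together these bound `|a_n(x,z) z·(q - q')|` by `L*_a u(x,n)` for any two slopes `q, q'`.
Choosing `d` points of `U_{x,n}` with maximal `|det|` then traps `I_u(x,n)` in a parallelepiped
of volume `(2 L*_a u)^d / |det|` and `conv U_{x,n}` in one of volume `2^d |det|` (Cramer's rule),
so `|I_u(x,n)| · |conv U_{x,n}| ≤ (4 L*_a u(x,n))^d`.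
-/

open MeasureTheory

namespace ParabolicMaxStep2

abbrev Zd (d : ℕ) := Fin d → ℤ

/-- A (deterministic) time-dependent environment. -/
abbrev TEnv (d : ℕ) := ℕ → Zd d → Zd d → ℝ

/-- `a` is a balanced time-dependent environment with jump range `U`. -/
def IsBalancedEnv (d : ℕ) (U : Finset (Zd d)) (a : TEnv d) : Prop :=
  ∀ n x, (∀ z ∈ U, 0 < a n x z) ∧ (∀ z, z ∉ U → a n x z = 0) ∧
    (∑ z ∈ U, a n x z = 1) ∧ (∀ i, ∑ z ∈ U, (z i : ℝ) * a n x z = 0)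

/-- The parabolic boundary `𝒟^p`. -/
def pBoundary (d : ℕ) (a : TEnv d) (D : Finset (Zd d × ℕ)) : Set (Zd d × ℕ) :=
  {q | q ∉ D ∧ ∃ x n, (x, n) ∈ D ∧ q.2 = n + 1 ∧ 0 < a n x (q.1 - x)}

/-- `I_u(x,n)`: slopes `p` with `u(x,n) − u(y,m) ≥ p·(x−y)` for all
`(y,m) ∈ 𝒟 ∪ 𝒟^p` with `m > n`. -/
def Iset (d : ℕ) (a : TEnv d) (D : Finset (Zd d × ℕ)) (u : Zd d × ℕ → ℝ)
    (p : Zd d × ℕ) : Set (Fin d → ℝ) :=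
  {q | ∀ r ∈ (D : Set (Zd d × ℕ)) ∪ pBoundary d a D, p.2 < r.2 →
    ∑ i, q i * ((p.1 i - r.1 i : ℤ) : ℝ) ≤ u p - u r}

/-- `L*_a u(x,n) = ∑_{z ≠ 0} a_n(x,z)(u(x,n) − u(x+z,n+1))`. -/
def Lstar (d : ℕ) (U : Finset (Zd d)) (a : TEnv d) (u : Zd d × ℕ → ℝ)
    (p : Zd d × ℕ) : ℝ :=
  ∑ z ∈ U.erase 0, a p.2 p.1 z * (u p - u (p.1 + z, p.2 + 1))

/-- The set `U_{x,n} = {a_n(x,z) z : z ∈ U} ⊂ ℝ^d`. -/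
def Uxn (d : ℕ) (U : Finset (Zd d)) (a : TEnv d) (p : Zd d × ℕ) : Set (Fin d → ℝ) :=
  (fun z : Zd d => fun i => a p.2 p.1 z * (z i : ℝ)) '' (U : Set (Zd d))

end ParabolicMaxStep2

open Matrix

section FiniteSums

variable {ι : Type*} {s : Finset ι} {α c δ : ι → ℝ}

theorem Finset.sum_mul_nonneg_of_sum_mul_eq_zero (hα : ∀ i ∈ s, 0 ≤ α i)
    (hc : ∑ i ∈ s, α i * c i = 0) (hδ : ∀ i ∈ s, -c i ≤ δ i) :
    0 ≤ ∑ i ∈ s, α i * δ i :=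
  calc (0 : ℝ) = ∑ i ∈ s, α i * -c i := by
        simp only [mul_neg, Finset.sum_neg_distrib, hc, neg_zero]
    _ ≤ ∑ i ∈ s, α i * δ i :=
      Finset.sum_le_sum fun i hi => mul_le_mul_of_nonneg_left (hδ i hi) (hα i hi)

/-- The mass `α j * c j` is balanced by the other terms, each bounded by `α i * δ i`. -/
theorem Finset.mul_sub_le_sum_mul_of_sum_mul_eq_zero [DecidableEq ι] (hα : ∀ i ∈ s, 0 ≤ α i)
    (hc : ∑ i ∈ s, α i * c i = 0) (hδ : ∀ i ∈ s, -c i ≤ δ i) {c' : ι → ℝ} {j : ι} (hj : j ∈ s)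
    (hδ' : -c' j ≤ δ j) :
    α j * (c j - c' j) ≤ ∑ i ∈ s, α i * δ i := by
  have hcj : α j * c j = ∑ i ∈ s.erase j, α i * -c i := by
    have := Finset.add_sum_erase s (fun i => α i * c i) hj
    simp only [mul_neg, Finset.sum_neg_distrib]
    linarith
  have hrest : ∑ i ∈ s.erase j, α i * -c i ≤ ∑ i ∈ s.erase j, α i * δ i :=
    Finset.sum_le_sum fun i hi => by
      have hi := Finset.mem_of_mem_erase hi
      exact mul_le_mul_of_nonneg_left (hδ i hi) (hα i hi)
  have hc'j : α j * -c' j ≤ α j * δ j := mul_le_mul_of_nonneg_left hδ' (hα j hj)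
  rw [← Finset.add_sum_erase s _ hj]
  linarith [mul_sub (α j) (c j) (c' j), mul_neg (α j) (c' j)]

end FiniteSums

section Volume

variable {d : ℕ}

theorem volume_convexHull_eq_zero_of_forall_det_eq_zero {S : Set (Fin d → ℝ)}
    (h : ∀ v : Fin d → Fin d → ℝ, (∀ j, v j ∈ S) → (Matrix.of v).det = 0) :
    volume (convexHull ℝ S) = 0 := by
  have hspan : Submodule.span ℝ S ≠ ⊤ := by
    intro hspan
    let b₀ := Module.Basis.ofSpan hspan.ge
    let b := b₀.reindex (b₀.indexEquiv (Pi.basisFun ℝ (Fin d)))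
    have hb : IsUnit (Matrix.of ⇑b) := linearIndependent_rows_iff_isUnit.1 b.linearIndependent
    refine ((Matrix.isUnit_iff_isUnit_det _).1 hb).ne_zero (h b fun j => ?_)
    exact Module.Basis.ofSpan_subset hspan.ge (by simp [b, b₀])
  exact measure_mono_null (convexHull_min Submodule.subset_span (Submodule.span ℝ S).convex)
    (Measure.addHaar_submodule volume _ hspan)

/-- By Cramer's rule, `s = Aᵀ *ᵥ ((det A)⁻¹ • cramer Aᵀ s)`, and the hypothesis puts the
coefficients in `[-1, 1]`. -/
theorem volume_convexHull_le_of_abs_det_updateRow_le (A : Matrix (Fin d) (Fin d) ℝ)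
    (hA : A.det ≠ 0) {S : Set (Fin d → ℝ)} (hS : ∀ s ∈ S, ∀ j, |(A.updateRow j s).det| ≤ |A.det|) :
    volume (convexHull ℝ S) ≤ ENNReal.ofReal |A.det| * ENNReal.ofReal 2 ^ d := by
  set cube := Set.univ.pi fun _ : Fin d => Set.Icc (-1 : ℝ) 1
  have hsub : S ⊆ Matrix.toLin' Aᵀ '' cube := by
    intro s hs
    refine ⟨A.det⁻¹ • Aᵀ.cramer s, fun j _ => abs_le.1 ?_, ?_⟩
    · rw [Pi.smul_apply, smul_eq_mul, abs_mul, abs_inv, cramer_transpose_apply,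
        inv_mul_le_iff₀ (abs_pos.2 hA), mul_one]
      exact hS s hs j
    · rw [map_smul, Matrix.toLin'_apply, Matrix.mulVec_cramer, Matrix.det_transpose, smul_smul,
        inv_mul_cancel₀ hA, one_smul]
  calc volume (convexHull ℝ S) ≤ volume (Matrix.toLin' Aᵀ '' cube) :=
        measure_mono (convexHull_min hsub ((convex_pi fun _ _ => convex_Icc _ _).linear_image _))
    _ = _ := by
        rw [Measure.addHaar_image_linearMap, LinearMap.det_toLin', Matrix.det_transpose,
          volume_pi_pi]
        simp [Real.volume_Icc]
        norm_num

theorem volume_le_of_abs_dotProduct_sub_le (A : Matrix (Fin d) (Fin d) ℝ) (hA : A.det ≠ 0)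
    {I : Set (Fin d → ℝ)} {q₀ : Fin d → ℝ} {L : ℝ} (h : ∀ q ∈ I, ∀ j, |A j ⬝ᵥ (q - q₀)| ≤ L) :
    volume I ≤ ENNReal.ofReal |A.det⁻¹| * ENNReal.ofReal (2 * L) ^ d := by
  set slab := Set.univ.pi fun _ : Fin d => Set.Icc (-L) L
  have hsub : I ⊆ (· + -q₀) ⁻¹' (Matrix.toLin' A ⁻¹' slab) :=
    fun q hq j _ => abs_le.1 (by
      show |A j ⬝ᵥ (q + -q₀)| ≤ L
      rw [← sub_eq_add_neg]
      exact h q hq j)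
  calc volume I ≤ volume ((· + -q₀) ⁻¹' (Matrix.toLin' A ⁻¹' slab)) := measure_mono hsub
    _ = volume (Matrix.toLin' A ⁻¹' slab) := measure_preimage_add_right _ _ _
    _ = _ := by
        rw [Measure.addHaar_preimage_linearMap _ (by rwa [LinearMap.det_toLin']),
          LinearMap.det_toLin', volume_pi_pi]
        simp only [Real.volume_Icc, sub_neg_eq_add, ← two_mul, Finset.prod_const,
          Finset.card_univ, Fintype.card_fin]

theorem volume_mul_volume_convexHull_le {S : Set (Fin d → ℝ)} (hS : S.Finite)
    {I : Set (Fin d → ℝ)} {q₀ : Fin d → ℝ} {L : ℝ} (h : ∀ q ∈ I, ∀ s ∈ S, |s ⬝ᵥ (q - q₀)| ≤ L) :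
    volume I * volume (convexHull ℝ S) ≤ ENNReal.ofReal (4 * L) ^ d := by
  by_cases hdeg : ∀ v : Fin d → Fin d → ℝ, (∀ j, v j ∈ S) → (Matrix.of v).det = 0
  · simp [volume_convexHull_eq_zero_of_forall_det_eq_zero hdeg]
  push Not at hdeg
  obtain ⟨v₀, hv₀S, hv₀⟩ := hdeg
  obtain ⟨v, hvS, hmax⟩ := Set.exists_max_image (Set.univ.pi fun _ => S)
    (fun v => |(Matrix.of v).det|) (Set.Finite.pi fun _ => hS) ⟨v₀, fun j _ => hv₀S j⟩
  set A := Matrix.of v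
  have hA : A.det ≠ 0 :=
    abs_pos.1 ((abs_pos.2 hv₀).trans_le (hmax v₀ fun j _ => hv₀S j))
  have hI := volume_le_of_abs_dotProduct_sub_le A hA fun q hq j => h q hq (v j) (hvS j trivial)
  have hC := volume_convexHull_le_of_abs_det_updateRow_le A hA fun s hs j =>
    hmax (Function.update v j s) fun i _ => by
      rcases eq_or_ne i j with rfl | hij
      · simpa using hs
      · simpa [hij] using hvS i trivial
  calc volume I * volume (convexHull ℝ S)
      ≤ ENNReal.ofReal |A.det⁻¹| * ENNReal.ofReal (2 * L) ^ d *
          (ENNReal.ofReal |A.det| * ENNReal.ofReal 2 ^ d) := mul_le_mul' hI hC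
    _ = ENNReal.ofReal (|A.det⁻¹| * |A.det|) * (ENNReal.ofReal 2 * ENNReal.ofReal (2 * L)) ^ d := by
        rw [ENNReal.ofReal_mul (abs_nonneg _), mul_pow]
        ring
    _ = ENNReal.ofReal (4 * L) ^ d := by
        rw [← abs_mul, inv_mul_cancel₀ hA, abs_one, ENNReal.ofReal_one, one_mul,
          ← ENNReal.ofReal_mul zero_le_two, ← mul_assoc]
        norm_num

end Volume

namespace ParabolicMaxStep2

section Environment

variable {d : ℕ} {U : Finset (Zd d)} {a : TEnv d} {D : Finset (Zd d × ℕ)} {u : Zd d × ℕ → ℝ}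
  {p : Zd d × ℕ}

theorem neg_dotProduct_le_of_mem_Iset (hp : p ∈ D) {z : Zd d} (hz : 0 < a p.2 p.1 z)
    {q : Fin d → ℝ} (hq : q ∈ Iset d a D u p) :
    -(q ⬝ᵥ (Int.cast ∘ z)) ≤ u p - u (p.1 + z, p.2 + 1) := by
  have hmem : (p.1 + z, p.2 + 1) ∈ (D : Set (Zd d × ℕ)) ∪ pBoundary d a D := by
    by_cases h : (p.1 + z, p.2 + 1) ∈ D
    · exact Or.inl h
    · exact Or.inr ⟨h, p.1, p.2, hp, rfl, by simpa using hz⟩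
  convert hq _ hmem (Nat.lt_succ_self _) using 1
  simp [dotProduct, ← Finset.sum_neg_distrib]

theorem sum_erase_zero_mul_dotProduct_eq_zero (ha : IsBalancedEnv d U a) (n : ℕ) (x : Zd d)
    (q : Fin d → ℝ) : ∑ z ∈ U.erase 0, a n x z * (q ⬝ᵥ (Int.cast ∘ z)) = 0 := by
  rw [Finset.sum_erase _ (by simp)]
  simp_rw [dotProduct, Finset.mul_sum]
  rw [Finset.sum_comm]
  refine Finset.sum_eq_zero fun i _ => ?_
  simp_rw [Function.comp_apply, mul_left_comm (a n x _), ← Finset.mul_sum, mul_comm (a n x _),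
    (ha n x).2.2.2 i, mul_zero]

theorem Lstar_nonneg (ha : IsBalancedEnv d U a) (hp : p ∈ D) (hI : (Iset d a D u p).Nonempty) :
    0 ≤ Lstar d U a u p := by
  obtain ⟨q, hq⟩ := hI
  have hpos : ∀ z ∈ U.erase 0, 0 < a p.2 p.1 z :=
    fun z hz => (ha p.2 p.1).1 z (Finset.mem_of_mem_erase hz)
  exact Finset.sum_mul_nonneg_of_sum_mul_eq_zero (fun z hz => (hpos z hz).le)
    (sum_erase_zero_mul_dotProduct_eq_zero ha p.2 p.1 q)
    (fun z hz => neg_dotProduct_le_of_mem_Iset hp (hpos z hz) hq)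

theorem mul_sub_dotProduct_le_Lstar (ha : IsBalancedEnv d U a) (hp : p ∈ D) {q q' : Fin d → ℝ}
    (hq : q ∈ Iset d a D u p) (hq' : q' ∈ Iset d a D u p) {z : Zd d} (hz : z ∈ U) :
    a p.2 p.1 z * ((q - q') ⬝ᵥ (Int.cast ∘ z)) ≤ Lstar d U a u p := by
  have hpos : ∀ z ∈ U, 0 < a p.2 p.1 z := (ha p.2 p.1).1
  rcases eq_or_ne z 0 with rfl | hz0
  · simpa using Lstar_nonneg ha hp ⟨q, hq⟩
  rw [sub_dotProduct]
  exact Finset.mul_sub_le_sum_mul_of_sum_mul_eq_zero (c' := fun z => q' ⬝ᵥ (Int.cast ∘ z))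
    (fun z hz => (hpos z (Finset.mem_of_mem_erase hz)).le)
    (sum_erase_zero_mul_dotProduct_eq_zero ha p.2 p.1 q)
    (fun z hz => neg_dotProduct_le_of_mem_Iset hp (hpos z (Finset.mem_of_mem_erase hz)) hq)
    (Finset.mem_erase.2 ⟨hz0, hz⟩) (neg_dotProduct_le_of_mem_Iset hp (hpos z hz) hq')

theorem abs_dotProduct_sub_le_Lstar (ha : IsBalancedEnv d U a) (hp : p ∈ D) {q q' : Fin d → ℝ}
    (hq : q ∈ Iset d a D u p) (hq' : q' ∈ Iset d a D u p) :
    ∀ s ∈ Uxn d U a p, |s ⬝ᵥ (q - q')| ≤ Lstar d U a u p := by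
  rintro _ ⟨z, hz, rfl⟩
  have hs : (fun i => a p.2 p.1 z * (z i : ℝ)) ⬝ᵥ (q - q') =
      a p.2 p.1 z * ((q - q') ⬝ᵥ (Int.cast ∘ z)) := by
    simp only [dotProduct, Finset.mul_sum, Function.comp_apply]
    exact Finset.sum_congr rfl fun i _ => by ring
  rw [hs, abs_le]
  refine ⟨?_, mul_sub_dotProduct_le_Lstar ha hp hq hq' hz⟩
  have := mul_sub_dotProduct_le_Lstar ha hp hq' hq hz
  rw [← neg_sub, neg_dotProduct, mul_neg] at this
  linarith

end Environment

theorem step2_gradient_set_measure_bound (d : ℕ) :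
    ∃ C : ℝ, 0 < C ∧
      ∀ (U : Finset (Zd d)), U.Nonempty →
      ∀ (a : TEnv d), IsBalancedEnv d U a →
      ∀ (D : Finset (Zd d × ℕ)) (u : Zd d × ℕ → ℝ) (p : Zd d × ℕ),
        p ∈ D → (Iset d a D u p).Nonempty →
        0 < (volume (convexHull ℝ (Uxn d U a p))).toReal →
        (volume (Iset d a D u p)).toReal ≤
          C * (U.card : ℝ) ^ d * (Lstar d U a u p) ^ d /
            (volume (convexHull ℝ (Uxn d U a p))).toReal := by
  refine ⟨4 ^ d, by positivity, ?_⟩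
  rintro U hU a ha D u p hp ⟨q₀, hq₀⟩ hvol
  have hL := Lstar_nonneg ha hp ⟨q₀, hq₀⟩
  have hprod := volume_mul_volume_convexHull_le (U.finite_toSet.image _)
    fun q hq => abs_dotProduct_sub_le_Lstar ha hp hq hq₀
  have hcard : 1 ≤ (U.card : ℝ) ^ d := one_le_pow₀ (by exact_mod_cast hU.card_pos)
  rw [le_div_iff₀ hvol, ← ENNReal.toReal_mul]
  calc _ ≤ (4 * Lstar d U a u p) ^ d :=
        ENNReal.toReal_le_of_le_ofReal (by positivity) (by rwa [ENNReal.ofReal_pow (by positivity)])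
    _ = 4 ^ d * 1 * Lstar d U a u p ^ d := by ring
    _ ≤ 4 ^ d * (U.card : ℝ) ^ d * Lstar d U a u p ^ d := by gcongr

end ParabolicMaxStep2
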